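/- arXiv:2512.20540 — 2 statements merged into one kernel-verified Lean document; each statement's English description precedes it below -/
import Mathlib

section
/- For every integer n ≥ 1 there exists a constant C > 0, depending only on n, with the following property: for all functions f_1, …, f_n : ℂ → ℂ that are holomorphic on some open set containing the closed unit disc, and all points z_1, …, z_n on the unit circle, |det( f_i(z_j) )_{1≤i,j≤n}| ≤ C · ∏_{1≤i<j≤n} |z_j − z_i| · ∏_{i=1}^{n} max_{1≤j≤n} sup_{|z|=1} |f_i^{(j−1)}(z)|, where f^{(m)} denotes the m-th iterated complex derivative. -/
/-!
Expanding each `f i` in Newton form at the nodes `z 0, …, z (n - 1)` factors the matrix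
`(f i (z j))` as `A * N`, where `A i k` is the divided difference `(f i)[z 0, …, z k]` and
`det N` is the Vandermonde determinant `∏ i < j, (z j - z i)`. Divided differences are iterated
`dslope`s, and for `g = dslope f a` the function `(w - a) ^ (j + 1) * g⁽ʲ⁾ w` vanishes at `a` and
has derivative `(w - a) ^ j * f⁽ʲ⁺¹⁾ w`; the mean value inequality therefore gives
`‖g⁽ʲ⁾‖ ≤ sup ‖f⁽ʲ⁺¹⁾‖` on any convex set, and by induction `‖A i k‖ ≤ sup ‖(f i)⁽ᵏ⁾‖` on the
closed disc. The maximum modulus principle moves these suprema to the circle, and the Leibniz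
expansion bounds `‖det A‖` by `n !` times the product of the row bounds.
-/

open Finset Metric Set Matrix Polynomial

theorem Matrix.det_of_prod_range_sub_eq_det_vandermonde {R : Type*} [CommRing R] [Nontrivial R]
    {n : ℕ} (z : Fin n → R) (x : ℕ → R) :
    (Matrix.of fun k j : Fin n => ∏ l ∈ range k, (z j - x l)).det = (vandermonde z).det := by
  set p : Fin n → R[X] := fun k => ∏ l ∈ range k, (X - C (x l))
  have hmonic : ∀ k, (p k).Monic := fun k => monic_prod_of_monic _ _ fun l _ => monic_X_sub_C _
  have hdeg : ∀ k, (p k).natDegree = k := fun k => by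
    simp [p, natDegree_prod_of_monic _ _ fun l _ => monic_X_sub_C (x l)]
  rw [det_eval_matrixOfPolynomials_eq_det_vandermonde z p hdeg hmonic, ← det_transpose]
  congr 1
  ext k j
  simp [p, eval_prod]

theorem Matrix.norm_det_le_factorial_mul_prod {R : Type*} [NormedCommRing R] [NormOneClass R]
    {n : Type*} [Fintype n] [DecidableEq n] {A : Matrix n n R} {b : n → ℝ}
    (hA : ∀ i j, ‖A i j‖ ≤ b i) :
    ‖A.det‖ ≤ (Fintype.card n).factorial * ∏ i, b i :=
  calc ‖A.det‖ ≤ ∑ σ : Equiv.Perm n, ‖Equiv.Perm.sign σ • ∏ i, A (σ i) i‖ := by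
        rw [det_apply]; exact norm_sum_le _ _
    _ ≤ ∑ σ : Equiv.Perm n, ∏ i, ‖A (σ i) i‖ := by
        gcongr with σ
        rw [norm_units_zsmul]
        exact Finset.norm_prod_le univ fun i => A (σ i) i
    _ ≤ ∑ σ : Equiv.Perm n, ∏ i, b (σ i) := by gcongr with σ _ i; exact hA _ _
    _ = (Fintype.card n).factorial * ∏ i, b i := by
        simp [Equiv.prod_comp, Fintype.card_perm]

theorem Finset.prod_filter_fst_lt_snd {α M : Type*} [Fintype α] [LinearOrder α]
    [LocallyFiniteOrderTop α] [CommMonoid M] (g : α × α → M) :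
    ∏ p ∈ univ.filter (fun p : α × α => p.1 < p.2), g p = ∏ i, ∏ j ∈ Ioi i, g (i, j) := by
  rw [prod_filter, Fintype.prod_prod_type]
  refine prod_congr rfl fun i _ => ?_
  rw [← prod_filter]
  congr 1
  ext j
  simp

theorem norm_le_sSup_norm_image_sphere {g : ℂ → ℂ} {c : ℂ} {r : ℝ} (hr : r ≠ 0)
    (hg : DifferentiableOn ℂ g (closedBall c r)) {w : ℂ} (hw : w ∈ closedBall c r) :
    ‖g w‖ ≤ sSup ((fun u => ‖g u‖) '' sphere c r) := by
  have hbdd : BddAbove ((fun u => ‖g u‖) '' sphere c r) :=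
    ((isCompact_sphere c r).image_of_continuousOn
      (hg.continuousOn.mono sphere_subset_closedBall).norm).bddAbove
  rw [← closure_ball c hr] at hg hw
  refine Complex.norm_le_of_forall_mem_frontier_norm_le isBounded_ball hg.diffContOnCl
    (fun u hu => le_csSup hbdd ⟨u, ?_, rfl⟩) hw
  rwa [frontier_ball c hr] at hu

section DividedDifference

variable {𝕜 E : Type*} [NontriviallyNormedField 𝕜] [NormedAddCommGroup E] [NormedSpace 𝕜 E]

/-- `dividedDifference f x k w` is the divided difference `f[x 0, …, x (k - 1), w]`. -/
noncomputable def dividedDifference (f : 𝕜 → E) (x : ℕ → 𝕜) : ℕ → 𝕜 → E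
  | 0 => f
  | k + 1 => dividedDifference (dslope f (x 0)) (fun l => x (l + 1)) k

theorem dividedDifference_newton (f : 𝕜 → E) (x : ℕ → 𝕜) (m : ℕ) (w : 𝕜) :
    f w = ∑ k ∈ range m, (∏ l ∈ range k, (w - x l)) • dividedDifference f x k (x k) +
      (∏ l ∈ range m, (w - x l)) • dividedDifference f x m w := by
  induction m generalizing f x with
  | zero => simp [dividedDifference]
  | succ m ih =>
    have h := sub_smul_dslope f (x 0) w
    rw [ih (dslope f (x 0)) (fun l => x (l + 1)), smul_add, smul_sum, eq_sub_iff_add_eq] at h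
    rw [sum_range_succ', prod_range_succ']
    simp only [prod_range_succ', dividedDifference, prod_range_zero, one_smul, mul_smul,
      smul_comm _ (w - x 0)]
    rw [← h]
    abel

theorem det_eval_eq_det_dividedDifference_mul_det_vandermonde {n : ℕ} (f : Fin n → 𝕜 → 𝕜)
    (z : Fin n → 𝕜) (x : ℕ → 𝕜) (hx : ∀ j : Fin n, x j = z j) :
    (Matrix.of fun i j => f i (z j)).det =
      (Matrix.of fun i k : Fin n => dividedDifference (f i) x k (x k)).det *
        (vandermonde z).det := by
  rw [← det_of_prod_range_sub_eq_det_vandermonde z x, ← det_mul]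
  congr 1
  ext i j
  have hvanish : ∏ l ∈ range n, (z j - x l) = 0 :=
    prod_eq_zero (mem_range.mpr j.2) (by rw [hx j, sub_self])
  rw [of_apply, dividedDifference_newton (f i) x n (z j), hvanish, zero_smul, add_zero, mul_apply,
    ← Fin.sum_univ_eq_sum_range (fun k => (∏ l ∈ range k, (z j - x l)) •
      dividedDifference (f i) x k (x k))]
  simp [mul_comm]

end DividedDifference

section Holomorphic

variable {U : Set ℂ} {f : ℂ → ℂ}

theorem DifferentiableOn.iteratedDeriv_of_isOpen (hf : DifferentiableOn ℂ f U) (hU : IsOpen U)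
    (j : ℕ) : DifferentiableOn ℂ (iteratedDeriv j f) U := by
  rw [iteratedDeriv_eq_iterate]
  exact ((hf.analyticOnNhd hU).iterated_deriv j).differentiableOn

theorem DifferentiableOn.hasDerivAt_iteratedDeriv (hf : DifferentiableOn ℂ f U) (hU : IsOpen U)
    (j : ℕ) {w : ℂ} (hw : w ∈ U) :
    HasDerivAt (iteratedDeriv j f) (iteratedDeriv (j + 1) f w) w := by
  rw [iteratedDeriv_succ]
  exact ((hf.iteratedDeriv_of_isOpen hU j).differentiableAt (hU.mem_nhds hw)).hasDerivAt

/-- The `(j + 1)`-st derivative of `(w - a) * dslope f a w = f w - f a`. -/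
theorem sub_mul_iteratedDeriv_succ_dslope_add (hf : DifferentiableOn ℂ f U) (hU : IsOpen U)
    {a : ℂ} (ha : a ∈ U) (j : ℕ) {w : ℂ} (hw : w ∈ U) :
    (w - a) * iteratedDeriv (j + 1) (dslope f a) w + (j + 1) * iteratedDeriv j (dslope f a) w =
      iteratedDeriv (j + 1) f w := by
  have hg : DifferentiableOn ℂ (dslope f a) U :=
    (Complex.differentiableOn_dslope (hU.mem_nhds ha)).mpr hf
  induction j generalizing w with
  | zero =>
    have hL : HasDerivAt (fun u => (u - a) * dslope f a u)
        (1 * iteratedDeriv 0 (dslope f a) w + (w - a) * iteratedDeriv 1 (dslope f a) w) w :=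
      ((hasDerivAt_id w).sub_const a).mul (hg.hasDerivAt_iteratedDeriv hU 0 hw)
    have hR : HasDerivAt (fun u => f u - f a) (iteratedDeriv 1 f w) w :=
      (hf.hasDerivAt_iteratedDeriv hU 0 hw).sub_const (f a)
    have hfun : (fun u => (u - a) * dslope f a u) = fun u => f u - f a := by
      funext u
      simpa only [smul_eq_mul] using sub_smul_dslope f a u
    rw [hfun] at hL
    linear_combination hL.unique hR
  | succ j ih =>
    have hL : HasDerivAt
        (fun u => (u - a) * iteratedDeriv (j + 1) (dslope f a) u +
          (j + 1) * iteratedDeriv j (dslope f a) u)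
        (1 * iteratedDeriv (j + 1) (dslope f a) w +
          (w - a) * iteratedDeriv (j + 2) (dslope f a) w +
          (j + 1) * iteratedDeriv (j + 1) (dslope f a) w) w :=
      (((hasDerivAt_id w).sub_const a).mul (hg.hasDerivAt_iteratedDeriv hU (j + 1) hw)).add
        ((hg.hasDerivAt_iteratedDeriv hU j hw).const_mul _)
    have hR : HasDerivAt
        (fun u => (u - a) * iteratedDeriv (j + 1) (dslope f a) u +
          (j + 1) * iteratedDeriv j (dslope f a) u)
        (iteratedDeriv (j + 2) f w) w :=
      (hf.hasDerivAt_iteratedDeriv hU (j + 1) hw).congr_of_eventuallyEq <|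
        Filter.eventually_of_mem (hU.mem_nhds hw) fun u hu => ih hu
    push_cast
    linear_combination hL.unique hR

theorem norm_iteratedDeriv_dslope_le (hf : DifferentiableOn ℂ f U) (hU : IsOpen U) {s : Set ℂ}
    (hs : Convex ℝ s) (hsU : s ⊆ U) {a : ℂ} (ha : a ∈ s) {j : ℕ} {M : ℝ}
    (hM : ∀ w ∈ s, ‖iteratedDeriv (j + 1) f w‖ ≤ M) {w : ℂ} (hw : w ∈ s) :
    ‖iteratedDeriv j (dslope f a) w‖ ≤ M := by
  have key := fun u (hu : u ∈ s) =>
    sub_mul_iteratedDeriv_succ_dslope_add hf hU (hsU ha) j (hsU hu)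
  rcases eq_or_ne w a with rfl | hwa
  · have hw' : (j + 1 : ℂ) * iteratedDeriv j (dslope f w) w = iteratedDeriv (j + 1) f w := by
      simpa using key w hw
    calc ‖iteratedDeriv j (dslope f w) w‖
        ≤ (j + 1) * ‖iteratedDeriv j (dslope f w) w‖ :=
          le_mul_of_one_le_left (norm_nonneg _) (by linarith [j.cast_nonneg (α := ℝ)])
      _ = ‖iteratedDeriv (j + 1) f w‖ := by
          rw [← hw', norm_mul]; norm_cast
      _ ≤ M := hM w hw
  set r := ‖w - a‖
  set t := s ∩ closedBall a r
  have hg : DifferentiableOn ℂ (dslope f a) U :=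
    (Complex.differentiableOn_dslope (hU.mem_nhds (hsU ha))).mpr hf
  have hderiv : ∀ u ∈ t,
      HasDerivWithinAt (fun u => (u - a) ^ (j + 1) * iteratedDeriv j (dslope f a) u)
        ((u - a) ^ j * iteratedDeriv (j + 1) f u) t u := by
    intro u hu
    refine ((((hasDerivAt_id' u).sub_const a).fun_pow (j + 1)).mul
      (hg.hasDerivAt_iteratedDeriv hU j (hsU hu.1))).hasDerivWithinAt.congr_deriv ?_
    rw [← key u hu.1]
    push_cast
    ring
  have hbound : ∀ u ∈ t, ‖(u - a) ^ j * iteratedDeriv (j + 1) f u‖ ≤ r ^ j * M := by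
    intro u hu
    rw [norm_mul, norm_pow]
    have hua : ‖u - a‖ ≤ r := by simpa [dist_eq_norm] using hu.2
    gcongr
    exact hM u hu.1
  have hmvt := (hs.inter (convex_closedBall a r)).norm_image_sub_le_of_norm_hasDerivWithin_le
    hderiv hbound ⟨ha, mem_closedBall_self (norm_nonneg _)⟩ ⟨hw, by simp [r, dist_eq_norm]⟩
  have hr : 0 < r ^ (j + 1) := pow_pos (norm_pos_iff.mpr (sub_ne_zero.mpr hwa)) _
  refine le_of_mul_le_mul_left ?_ hr
  simpa [norm_mul, norm_pow, pow_succ, mul_comm, mul_left_comm, mul_assoc] using hmvt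

theorem norm_dividedDifference_le (hf : DifferentiableOn ℂ f U) (hU : IsOpen U) {s : Set ℂ}
    (hs : Convex ℝ s) (hsU : s ⊆ U) {x : ℕ → ℂ} {k : ℕ} (hx : ∀ l < k, x l ∈ s) {B : ℝ}
    (hB : ∀ w ∈ s, ‖iteratedDeriv k f w‖ ≤ B) {w : ℂ} (hw : w ∈ s) :
    ‖dividedDifference f x k w‖ ≤ B := by
  induction k generalizing f x with
  | zero => simpa [dividedDifference] using hB w hw
  | succ k ih =>
    have hx0 : x 0 ∈ s := hx 0 k.succ_pos
    exact ih ((Complex.differentiableOn_dslope (hU.mem_nhds (hsU hx0))).mpr hf)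
      (fun l hl => hx (l + 1) (by omega))
      (fun u hu => norm_iteratedDeriv_dslope_le hf hU hs hsU hx0 hB hu)

end Holomorphic

theorem determinant_bound_of_analytic_general (n : ℕ) :
    ∃ C : ℝ, 0 < C ∧
      ∀ f : Fin n → ℂ → ℂ,
        (∀ i, ∃ U : Set ℂ, IsOpen U ∧ Metric.closedBall (0 : ℂ) 1 ⊆ U ∧
            DifferentiableOn ℂ (f i) U) →
        ∀ z : Fin n → ℂ, (∀ j, ‖z j‖ = 1) →
          ‖(Matrix.of fun i j : Fin n => f i (z j)).det‖ ≤
            C * (∏ p ∈ Finset.univ.filter (fun p : Fin n × Fin n => p.1 < p.2),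
                  ‖z p.2 - z p.1‖) *
              ∏ i : Fin n,
                ⨆ j : Fin n,
                  sSup ((fun w : ℂ => ‖iteratedDeriv (j : ℕ) (f i) w‖) ''
                    Metric.sphere (0 : ℂ) 1) := by
  refine ⟨n.factorial, by positivity, fun f hf z hz => ?_⟩
  choose U hU hBU hfU using hf
  let x : ℕ → ℂ := fun l => if h : l < n then z ⟨l, h⟩ else 0
  have hx : ∀ j : Fin n, x j = z j := fun j => dif_pos j.2
  have hxB : ∀ l < n, x l ∈ closedBall (0 : ℂ) 1 := fun l hl => by simp [x, hl, hz]
  have hdd : ∀ i k : Fin n, ‖dividedDifference (f i) x k (x k)‖ ≤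
      ⨆ j : Fin n, sSup ((fun w => ‖iteratedDeriv j (f i) w‖) '' sphere 0 1) := by
    intro i k
    refine le_trans ?_ (le_ciSup (finite_range _).bddAbove k)
    exact norm_dividedDifference_le (hfU i) (hU i) (convex_closedBall 0 1) (hBU i)
      (fun l hl => hxB l (hl.trans k.2))
      (fun w hw => norm_le_sSup_norm_image_sphere one_ne_zero
        (((hfU i).iteratedDeriv_of_isOpen (hU i) k).mono (hBU i)) hw)
      (hxB k k.2)
  rw [det_eval_eq_det_dividedDifference_mul_det_vandermonde f z x hx, det_vandermonde, norm_mul,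
    prod_filter_fst_lt_snd]
  simp only [norm_prod]
  calc _ ≤ (n.factorial * ∏ i, ⨆ j : Fin n,
          sSup ((fun w => ‖iteratedDeriv j (f i) w‖) '' sphere 0 1)) *
          ∏ i, ∏ j ∈ Ioi i, ‖z j - z i‖ := by
        gcongr
        simpa only [Fintype.card_fin] using norm_det_le_factorial_mul_prod (A := of _) hdd
    _ = _ := by ring

/-- paper's Lemma 2.12: a determinant bound for holomorphic functions
evaluated at points of the unit circle. -/
theorem determinant_bound_of_analytic (n : ℕ) (hn : 1 ≤ n) :
    ∃ C : ℝ, 0 < C ∧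
      ∀ f : Fin n → ℂ → ℂ,
        (∀ i, ∃ U : Set ℂ, IsOpen U ∧ Metric.closedBall (0 : ℂ) 1 ⊆ U ∧
            DifferentiableOn ℂ (f i) U) →
        ∀ z : Fin n → ℂ, (∀ j, ‖z j‖ = 1) →
          ‖(Matrix.of fun i j : Fin n => f i (z j)).det‖ ≤
            C * (∏ p ∈ Finset.univ.filter (fun p : Fin n × Fin n => p.1 < p.2),
                  ‖z p.2 - z p.1‖) *
              ∏ i : Fin n,
                ⨆ j : Fin n,
                  sSup ((fun w : ℂ => ‖iteratedDeriv (j : ℕ) (f i) w‖) ''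
                    Metric.sphere (0 : ℂ) 1) :=
  determinant_bound_of_analytic_general n
end

section
/- For every integer n ≥ 1 there exists a constant C > 0, depending only on n, such that for all integers m_1, …, m_n and all points z_1, …, z_n on the unit circle of ℂ: |det( z_j^{m_i} )_{1≤i,j≤n}| ≤ C · ∏_{1≤i<j≤n} |z_j − z_i| · ∏_{i=1}^{n} (1 + |m_i|)^{n−1}, where z^{m} denotes the m-th integer power of z. -/
/-!
Subtracting the first column from the others turns the entry `f (z j)` into
`f (z j) - f (z 0) = (z j - z 0) * g (z j)`, where `g` is the divided difference of `f` at `z 0`.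
If `f` is a Laurent polynomial with exponents in `[-M, M]` and coefficients of ℓ¹-norm `L`,
then `g` again has exponents in `[-M, M]` and ℓ¹-norm at most `M * L`, because
`(z ^ k - a ^ k) / (z - a)` is a sum of `|k|` unimodular monomials when `|a| = 1`. Pulling the
factors `z j - z 0` out of the columns and expanding along the first column, induction on `n` gives
`‖det (f i (z j))‖ ≤ n! * ∏_{i < j} ‖z j - z i‖ * ∏ i, L i * M i ^ (n - 1)` on the unit circle;
the monomial `z ^ m` has `L = 1` and `M = 1 + |m|`.
-/

open Finset
open scoped Nat

namespace DeterminantBound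

def LaurentBounded (M : ℕ) (L : ℝ) (f : ℂ → ℂ) : Prop :=
  ∃ c : ℤ → ℂ, ∑ k ∈ Icc (-(M : ℤ)) M, ‖c k‖ ≤ L ∧
    ∀ z, f z = ∑ k ∈ Icc (-(M : ℤ)) M, c k * z ^ k

namespace LaurentBounded

variable {M : ℕ} {L L' : ℝ} {f g : ℂ → ℂ}

lemma nonneg (hf : LaurentBounded M L f) : 0 ≤ L := by
  obtain ⟨c, hc, -⟩ := hf
  exact (sum_nonneg fun _ _ => norm_nonneg _).trans hc

lemma mono (hf : LaurentBounded M L f) (h : L ≤ L') : LaurentBounded M L' f := by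
  obtain ⟨c, hc, hfc⟩ := hf
  exact ⟨c, hc.trans h, hfc⟩

lemma norm_le (hf : LaurentBounded M L f) {z : ℂ} (hz : ‖z‖ = 1) : ‖f z‖ ≤ L := by
  obtain ⟨c, hc, hfc⟩ := hf
  rw [hfc]
  refine (norm_sum_le _ _).trans (le_of_eq_of_le (sum_congr rfl fun k _ => ?_) hc)
  rw [norm_mul, norm_zpow, hz, one_zpow, mul_one]

lemma zero : LaurentBounded M 0 fun _ => 0 :=
  ⟨0, by simp, by simp⟩

lemma add (hf : LaurentBounded M L f) (hg : LaurentBounded M L' g) :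
    LaurentBounded M (L + L') (fun z => f z + g z) := by
  obtain ⟨c, hc, hfc⟩ := hf
  obtain ⟨d, hd, hgd⟩ := hg
  refine ⟨c + d, ?_, fun z => ?_⟩
  · exact (sum_le_sum fun k _ => norm_add_le (c k) (d k)).trans
      (sum_add_distrib.trans_le (add_le_add hc hd))
  · simp only [hfc, hgd, Pi.add_apply, add_mul, sum_add_distrib]

lemma const_mul (hf : LaurentBounded M L f) (a : ℂ) :
    LaurentBounded M (‖a‖ * L) (fun z => a * f z) := by
  obtain ⟨c, hc, hfc⟩ := hf
  refine ⟨fun k => a * c k, ?_, fun z => ?_⟩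
  · simp only [norm_mul, ← mul_sum]
    exact mul_le_mul_of_nonneg_left hc (norm_nonneg a)
  · simp only [hfc, mul_sum, mul_assoc]

lemma sum {ι : Type*} (s : Finset ι) {L : ι → ℝ} {f : ι → ℂ → ℂ}
    (hf : ∀ i ∈ s, LaurentBounded M (L i) (f i)) :
    LaurentBounded M (∑ i ∈ s, L i) (fun z => ∑ i ∈ s, f i z) := by
  classical
  induction s using Finset.induction_on with
  | empty => simpa using (zero : LaurentBounded M 0 fun _ => 0)
  | insert i s hi ih =>
    simp only [sum_insert hi]
    exact (hf i (mem_insert_self i s)).add (ih fun j hj => hf j (mem_insert_of_mem hj))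

lemma zpow {k : ℤ} (hk : |k| ≤ M) : LaurentBounded M 1 (· ^ k) := by
  classical
  have hkM : k ∈ Icc (-(M : ℤ)) M := mem_Icc.mpr (abs_le.mp hk)
  refine ⟨fun j => if j = k then 1 else 0, ?_, fun z => ?_⟩
  · simp [apply_ite, hkM]
  · simp [hkM]

end LaurentBounded

lemma LaurentBounded.sum_range_unimodular_mul_zpow {M j : ℕ} (hj : j ≤ M) {c : ℕ → ℂ}
    (hc : ∀ s, ‖c s‖ = 1) {e : ℕ → ℤ} (he : ∀ s < j, |e s| ≤ M) :
    LaurentBounded M M fun z => ∑ s ∈ range j, c s * z ^ e s := by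
  have hterm (s) (hs : s ∈ range j) : LaurentBounded M 1 fun z => c s * z ^ e s := by
    simpa [hc s] using (LaurentBounded.zpow (he s (mem_range.mp hs))).const_mul (c s)
  refine (LaurentBounded.sum _ hterm).mono ?_
  simp only [sum_const, card_range, nsmul_eq_mul, mul_one]
  exact_mod_cast hj

lemma exists_zpow_sub_zpow_eq_mul {M : ℕ} {k : ℤ} (hk : |k| ≤ M) {a : ℂ} (ha : ‖a‖ = 1) :
    ∃ g, LaurentBounded M M g ∧ ∀ z ≠ 0, z ^ k - a ^ k = (z - a) * g z := by
  have ha0 : a ≠ 0 := norm_ne_zero_iff.mp (ha ▸ one_ne_zero)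
  obtain ⟨hk₁, hk₂⟩ := abs_le.mp hk
  obtain ⟨j, rfl | rfl⟩ := Int.eq_nat_or_neg k
  · refine ⟨fun z => ∑ s ∈ range j, a ^ (j - 1 - s) * z ^ (s : ℤ),
      LaurentBounded.sum_range_unimodular_mul_zpow (by omega) (by simp [ha])
        fun s hs => abs_le.mpr (by omega), fun z _ => ?_⟩
    simp only [zpow_natCast]
    rw [← geom_sum₂_mul, mul_comm]
    simp only [mul_comm]
  -- `z⁻ʲ - a⁻ʲ = -(a⁻ʲ z⁻ʲ) (zʲ - aʲ)`, and `zʲ - aʲ` factors as in the first case.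
  · refine ⟨fun z => ∑ s ∈ range j, -(a ^ (-(j : ℤ)) * a ^ (j - 1 - s)) * z ^ ((s : ℤ) - j),
      LaurentBounded.sum_range_unimodular_mul_zpow (by omega) (by simp [ha])
        fun s hs => abs_le.mpr (by omega), fun z hz => ?_⟩
    have hgeom := geom_sum₂_mul z a j
    simp only [zpow_sub₀ hz, zpow_neg, zpow_natCast]
    have hsum : ∑ s ∈ range j, -((a ^ j)⁻¹ * a ^ (j - 1 - s)) * (z ^ s / z ^ j)
        = -((a ^ j)⁻¹ * (z ^ j)⁻¹) * ∑ s ∈ range j, z ^ s * a ^ (j - 1 - s) := by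
      rw [mul_sum]
      exact sum_congr rfl fun s _ => by ring
    rw [hsum]
    linear_combination (a ^ j)⁻¹ * (z ^ j)⁻¹ * hgeom
      + (a ^ j)⁻¹ * mul_inv_cancel₀ (pow_ne_zero j hz)
      - (z ^ j)⁻¹ * mul_inv_cancel₀ (pow_ne_zero j ha0)

lemma LaurentBounded.exists_sub_eq_mul {M : ℕ} {L : ℝ} {f : ℂ → ℂ} (hf : LaurentBounded M L f)
    {a : ℂ} (ha : ‖a‖ = 1) :
    ∃ g, LaurentBounded M (M * L) g ∧ ∀ z ≠ 0, f z - f a = (z - a) * g z := by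
  obtain ⟨c, hc, hfc⟩ := hf
  choose! g hg hgz using fun k (hk : k ∈ Icc (-(M : ℤ)) M) =>
    exists_zpow_sub_zpow_eq_mul (abs_le.mpr (mem_Icc.mp hk)) ha
  refine ⟨fun z => ∑ k ∈ Icc (-(M : ℤ)) M, c k * g k z, ?_, fun z hz => ?_⟩
  · refine (LaurentBounded.sum _ fun k hk => (hg k hk).const_mul (c k)).mono ?_
    rw [← sum_mul, mul_comm]
    exact mul_le_mul_of_nonneg_left hc (Nat.cast_nonneg M)
  · simp only [hfc, ← sum_sub_distrib, mul_sum, ← mul_sub]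
    exact sum_congr rfl fun k hk => by rw [hgz k hk z hz]; ring

lemma det_eq_prod_mul_det_of_sub_col_zero {R : Type*} [CommRing R] {n : ℕ}
    {A B : Matrix (Fin (n + 1)) (Fin (n + 1)) R} (u : Fin n → R) (h₀ : ∀ i, A i 0 = B i 0)
    (hsucc : ∀ i j, A i j.succ - A i 0 = u j * B i j.succ) :
    A.det = (∏ j, u j) * B.det := by
  set C : Matrix (Fin (n + 1)) (Fin (n + 1)) R :=
    .of fun i j => (Fin.cons 1 u : Fin (n + 1) → R) j * B i j
  have hAC : A.transpose.det = C.transpose.det := by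
    refine Matrix.det_eq_of_forall_row_eq_smul_add_const (Fin.cons 0 fun _ => 1) 0 rfl
      fun j i => ?_
    cases j using Fin.cases with
    | zero => simp [C, h₀]
    | succ j => simp [C, ← h₀, ← hsucc]
  rw [← Matrix.det_transpose, hAC, Matrix.det_transpose, Matrix.det_mul_row, Fin.prod_univ_succ]
  simp

lemma norm_det_succ_le {R : Type*} [NormedCommRing R] [NormOneClass R] {n : ℕ}
    (B : Matrix (Fin (n + 1)) (Fin (n + 1)) R) :
    ‖B.det‖ ≤ ∑ i, ‖B i 0‖ * ‖(B.submatrix i.succAbove Fin.succ).det‖ := by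
  rw [Matrix.det_succ_column_zero]
  refine (norm_sum_le _ _).trans (sum_le_sum fun i _ => ?_)
  refine (norm_mul_le _ _).trans (mul_le_mul_of_nonneg_right ?_ (norm_nonneg _))
  refine (norm_mul_le _ _).trans (mul_le_of_le_one_left (norm_nonneg _) ?_)
  exact (norm_pow_le _ _).trans (by rw [norm_neg, norm_one, one_pow])

lemma prod_filter_lt_eq_prod_prod_Ioi {β : Type*} [CommMonoid β] {ι : Type*} [Fintype ι]
    [LinearOrder ι] [LocallyFiniteOrderTop ι] (f : ι → ι → β) :
    ∏ p ∈ univ.filter (fun p : ι × ι => p.1 < p.2), f p.1 p.2 = ∏ i, ∏ j ∈ Ioi i, f i j :=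
  prod_finset_product' _ _ _ (by simp)

lemma prod_prod_Ioi_fin_succ {β : Type*} [CommMonoid β] {n : ℕ}
    (f : Fin (n + 1) → Fin (n + 1) → β) :
    ∏ i, ∏ j ∈ Ioi i, f i j =
      (∏ j : Fin n, f 0 j.succ) * ∏ i : Fin n, ∏ j ∈ Ioi i, f i.succ j.succ := by
  rw [Fin.prod_univ_succ, Fin.prod_Ioi_zero]
  simp only [Fin.prod_Ioi_succ]

lemma mul_prod_succAbove_le {n : ℕ} {M L : Fin (n + 1) → ℝ} (hM : ∀ i, 1 ≤ M i)
    (hL : ∀ i, 0 ≤ L i) (i : Fin (n + 1)) :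
    L i * ∏ p : Fin n, M (i.succAbove p) * L (i.succAbove p) * M (i.succAbove p) ^ (n - 1) ≤
      ∏ i, L i * M i ^ n := by
  have hprod : ∏ p : Fin n, M (i.succAbove p) * L (i.succAbove p) * M (i.succAbove p) ^ (n - 1) =
      ∏ p : Fin n, L (i.succAbove p) * M (i.succAbove p) ^ n :=
    prod_congr rfl fun p _ => by
      rw [mul_comm (M _), mul_assoc, mul_pow_sub_one (Fin.pos p).ne']
  rw [hprod, Fin.prod_univ_succAbove _ i]
  refine mul_le_mul_of_nonneg_right ?_
    (prod_nonneg fun p _ => mul_nonneg (hL _) (pow_nonneg (zero_le_one.trans (hM _)) _))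
  exact le_mul_of_one_le_right (hL i) (one_le_pow₀ (hM i))

theorem norm_det_le_of_laurentBounded {n : ℕ} {M : Fin n → ℕ} {L : Fin n → ℝ}
    {f : Fin n → ℂ → ℂ} (hM : ∀ i, 1 ≤ M i) (hf : ∀ i, LaurentBounded (M i) (L i) (f i))
    {z : Fin n → ℂ} (hz : ∀ j, ‖z j‖ = 1) :
    ‖(Matrix.of fun i j => f i (z j)).det‖ ≤
      n ! * (∏ i, ∏ j ∈ Ioi i, ‖z j - z i‖) * ∏ i, L i * (M i : ℝ) ^ (n - 1) := by
  induction n with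
  | zero => simp
  | succ n ih =>
    choose g hg hfg using fun i => (hf i).exists_sub_eq_mul (hz 0)
    set B : Matrix (Fin (n + 1)) (Fin (n + 1)) ℂ :=
      .of fun i k => Fin.cases (f i (z 0)) (fun j => g i (z j.succ)) k
    have hdet : (Matrix.of fun i j => f i (z j)).det = (∏ j : Fin n, (z j.succ - z 0)) * B.det :=
      det_eq_prod_mul_det_of_sub_col_zero _ (fun i => rfl)
        fun i j => hfg i _ (norm_ne_zero_iff.mp ((hz _) ▸ one_ne_zero))
    set P := ∏ i : Fin n, ∏ j ∈ Ioi i, ‖z j.succ - z i.succ‖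
    have hminor (i : Fin (n + 1)) : ‖(B.submatrix i.succAbove Fin.succ).det‖ ≤ n ! * P *
        ∏ p, (M (i.succAbove p) : ℝ) * L (i.succAbove p) * M (i.succAbove p) ^ (n - 1) :=
      ih (fun p => hM _) (fun p => hg _) (fun q => hz _)
    have hMℝ (i : Fin (n + 1)) : (1 : ℝ) ≤ M i := by exact_mod_cast hM i
    have hP : 0 ≤ (n ! : ℝ) * P := by positivity
    calc ‖(Matrix.of fun i j => f i (z j)).det‖
        = (∏ j : Fin n, ‖z j.succ - z 0‖) * ‖B.det‖ := by rw [hdet, norm_mul, norm_prod]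
      _ ≤ (∏ j : Fin n, ‖z j.succ - z 0‖) *
            ∑ i : Fin (n + 1), n ! * P * ∏ i, L i * (M i : ℝ) ^ n := by
        refine mul_le_mul_of_nonneg_left ((norm_det_succ_le B).trans (sum_le_sum fun i _ => ?_))
          (by positivity)
        calc ‖B i 0‖ * ‖(B.submatrix i.succAbove Fin.succ).det‖
            ≤ L i * (n ! * P * ∏ p, (M (i.succAbove p) : ℝ) * L (i.succAbove p) *
                M (i.succAbove p) ^ (n - 1)) :=
              mul_le_mul ((hf i).norm_le (hz 0)) (hminor i) (norm_nonneg _) (hf i).nonneg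
          _ ≤ n ! * P * ∏ i, L i * (M i : ℝ) ^ n := by
            rw [mul_left_comm]
            exact mul_le_mul_of_nonneg_left
              (mul_prod_succAbove_le hMℝ (fun i => (hf i).nonneg) i) hP
      _ = (n + 1)! * (∏ i, ∏ j ∈ Ioi i, ‖z j - z i‖) * ∏ i, L i * (M i : ℝ) ^ (n + 1 - 1) := by
        rw [prod_prod_Ioi_fin_succ (fun i j => ‖z j - z i‖), sum_const, card_univ,
          Fintype.card_fin, nsmul_eq_mul, Nat.factorial_succ, Nat.add_sub_cancel]
        push_cast
        ring

end DeterminantBound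

open DeterminantBound

theorem determinant_bound_monomials_general (n : ℕ) :
    ∃ C : ℝ, 0 < C ∧
      ∀ (m : Fin n → ℤ) (z : Fin n → ℂ), (∀ j, ‖z j‖ = 1) →
        ‖(Matrix.of fun i j : Fin n => z j ^ m i).det‖ ≤
          C * (∏ p ∈ Finset.univ.filter (fun p : Fin n × Fin n => p.1 < p.2),
                ‖z p.2 - z p.1‖) *
            ∏ i : Fin n, (1 + |(m i : ℝ)|) ^ (n - 1) := by
  refine ⟨n !, by positivity, fun m z hz => ?_⟩
  have hm (i : Fin n) : LaurentBounded (1 + (m i).natAbs) 1 (· ^ m i) :=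
    LaurentBounded.zpow (by push_cast [Nat.cast_natAbs]; linarith)
  have hbound := norm_det_le_of_laurentBounded (fun i => Nat.le_add_right 1 _) hm hz
  simpa [prod_filter_lt_eq_prod_prod_Ioi fun i j => ‖z j - z i‖, Nat.cast_natAbs] using hbound

/-- determinant bound for Laurent monomials at points of the unit circle. -/
theorem determinant_bound_monomials (n : ℕ) (hn : 1 ≤ n) :
    ∃ C : ℝ, 0 < C ∧
      ∀ (m : Fin n → ℤ) (z : Fin n → ℂ), (∀ j, ‖z j‖ = 1) →
        ‖(Matrix.of fun i j : Fin n => z j ^ m i).det‖ ≤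
          C * (∏ p ∈ Finset.univ.filter (fun p : Fin n × Fin n => p.1 < p.2),
                ‖z p.2 - z p.1‖) *
            ∏ i : Fin n, (1 + |(m i : ℝ)|) ^ (n - 1) :=
  determinant_bound_monomials_general n
end
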